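/- For a one-qubit dephasing channel with function f (|f| ≤ 1), the superfidelity between the Jamiołkowski states of D_f and D_{f̄} equals 1 - (|f|² - Re(f²))/2. -/

import Mathlib

/-!
Both Jamiołkowski states have purity `(1 + |f|²)/2`, so the square-root term of the
superfidelity collapses to `(1 - |f|²)/2`, while the overlap is `tr(ρ_f ρ_f̄) = (1 + Re f²)/2`.
-/

open Matrix

noncomputable def sG {N : ℕ} (ρ σ : Matrix (Fin N) (Fin N) ℂ) : ℝ :=
  (trace (ρ * σ)).re +
    Real.sqrt (1 - (trace (ρ * ρ)).re) * Real.sqrt (1 - (trace (σ * σ)).re)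

/-- Jamiołkowski state of the one-qubit dephasing channel D_f. -/
noncomputable def dephJam (f : ℂ) : Matrix (Fin 4) (Fin 4) ℂ :=
  ((1 : ℂ) / 2) • !![1, 0, 0, f; 0, 0, 0, 0; 0, 0, 0, 0; star f, 0, 0, 1]

theorem sG_of_re_trace_mul_self_eq {N : ℕ} (ρ σ : Matrix (Fin N) (Fin N) ℂ)
    (hσ : (trace (σ * σ)).re = (trace (ρ * ρ)).re) (hρ : (trace (ρ * ρ)).re ≤ 1) :
    sG ρ σ = (trace (ρ * σ)).re + (1 - (trace (ρ * ρ)).re) := by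
  rw [sG, hσ, Real.mul_self_sqrt (sub_nonneg.2 hρ)]

theorem trace_dephJam_mul_dephJam (f g : ℂ) :
    trace (dephJam f * dephJam g) = (2 + f * star g + star f * g) / 4 := by
  simp [dephJam, trace, Fin.sum_univ_four]
  ring

theorem re_trace_dephJam_mul_dephJam (f g : ℂ) :
    (trace (dephJam f * dephJam g)).re = (1 + (f * star g).re) / 2 := by
  rw [trace_dephJam_mul_dephJam]
  simp only [Complex.div_ofNat_re, Complex.add_re, Complex.re_ofNat]
  rw [← Complex.conj_re (f * star g), map_mul, Complex.star_def, Complex.conj_conj]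
  ring

theorem re_trace_dephJam_mul_self (f : ℂ) :
    (trace (dephJam f * dephJam f)).re = (1 + ‖f‖ ^ 2) / 2 := by
  rw [re_trace_dephJam_mul_dephJam, Complex.star_def, Complex.mul_conj, Complex.ofReal_re,
    Complex.normSq_eq_norm_sq]

theorem superfidelity_dephasing_conj (f : ℂ) (hf : ‖f‖ ≤ 1) :
    sG (dephJam f) (dephJam (star f)) =
      1 - (‖f‖ ^ 2 - (f ^ 2).re) / 2 := by
  have hpurity : (trace (dephJam f * dephJam f)).re ≤ 1 := by
    rw [re_trace_dephJam_mul_self]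
    nlinarith [norm_nonneg f]
  have hequal : (trace (dephJam (star f) * dephJam (star f))).re =
      (trace (dephJam f * dephJam f)).re := by
    rw [re_trace_dephJam_mul_self, re_trace_dephJam_mul_self, norm_star]
  rw [sG_of_re_trace_mul_self_eq _ _ hequal hpurity, re_trace_dephJam_mul_dephJam, star_star,
    re_trace_dephJam_mul_self, ← sq]
  ring
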